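/- arXiv:math/0011261 — 3 statements merged into one kernel-verified Lean document; each statement's English description precedes it below -/
import Mathlib

section
/- Euler's relation: ζ(1,2) = ζ(3), i.e. ∑_{0 < n_1 < n_2} 1/(n_1 n_2^2) = ∑_{n≥1} 1/n^3. -/
/-!
Euler's argument through the Tornheim sum `W = ∑_{a, c ≥ 1} 1 / (a c (a + c))`. The partial
fraction `1 / (a c (a + c)) = 1 / (a (a + c)²) + 1 / (c (a + c)²)` gives `W = 2 ζ(1,2)`. Summing
over `c` first instead, `1 / (a c (a + c)) = (1 / c - 1 / (a + c)) / a²` telescopes to `H_a / a²`,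
and `H_a = H_{a-1} + 1 / a` gives `W = ∑_a H_{a-1} / a² + ζ(3) = ζ(1,2) + ζ(3)`. Cancelling
`ζ(1,2)` needs it finite, which follows from `1 / (a b²) ≤ (a b)^(-3/2)` for `a < b`.
-/

open Filter Topology Finset

/- Both summands live on all of `ℕ × ℕ`; `tornheimTerm` vanishes when an index is `0`
because `1 / 0 = 0`. -/
noncomputable def zetaOneTwoTerm : ℕ × ℕ → ℝ :=
  {p : ℕ × ℕ | 0 < p.1 ∧ p.1 < p.2}.indicator fun p => 1 / ((p.1 : ℝ) * (p.2 : ℝ) ^ 2)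

noncomputable def tornheimTerm (p : ℕ × ℕ) : ℝ := 1 / ((p.1 : ℝ) * p.2 * (p.1 + p.2))

lemma zetaOneTwoTerm_of_lt {a b : ℕ} (ha : 0 < a) (hab : a < b) :
    zetaOneTwoTerm (a, b) = 1 / ((a : ℝ) * (b : ℝ) ^ 2) :=
  Set.indicator_of_mem (show (a, b) ∈ {p : ℕ × ℕ | 0 < p.1 ∧ p.1 < p.2} from ⟨ha, hab⟩) _

lemma zetaOneTwoTerm_eq_zero {a b : ℕ} (h : ¬(0 < a ∧ a < b)) : zetaOneTwoTerm (a, b) = 0 :=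
  Set.indicator_of_notMem (show (a, b) ∉ {p : ℕ × ℕ | 0 < p.1 ∧ p.1 < p.2} from h) _

lemma zetaOneTwoTerm_nonneg (p : ℕ × ℕ) : 0 ≤ zetaOneTwoTerm p :=
  Set.indicator_nonneg (fun _ _ => by positivity) p

lemma zetaOneTwoTerm_le_rpow (p : ℕ × ℕ) :
    zetaOneTwoTerm p ≤ ((p.1 : ℝ) ^ (3 / 2 : ℝ))⁻¹ * ((p.2 : ℝ) ^ (3 / 2 : ℝ))⁻¹ := by
  obtain ⟨a, b⟩ := p
  by_cases hab : 0 < a ∧ a < b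
  · rw [zetaOneTwoTerm_of_lt hab.1 hab.2]
    have ha : (0 : ℝ) < a := by exact_mod_cast hab.1
    have hab : (a : ℝ) < b := by exact_mod_cast hab.2
    have hb : (0 : ℝ) < b := ha.trans hab
    have h32 : ∀ x : ℝ, 0 < x → x ^ (3 / 2 : ℝ) = x * √x := fun x hx => by
      rw [Real.sqrt_eq_rpow, ← Real.rpow_one_add' hx.le (by norm_num)]; norm_num
    have hsqrt : √a * √b ≤ b :=
      calc √a * √b ≤ √b * √b := by gcongr
        _ = b := Real.mul_self_sqrt hb.le
    rw [h32 a ha, h32 b hb, ← mul_inv, one_div]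
    refine inv_anti₀ (mul_pos (mul_pos ha (Real.sqrt_pos.2 ha))
      (mul_pos hb (Real.sqrt_pos.2 hb))) ?_
    calc a * √a * (b * √b) = a * b * (√a * √b) := by ring
      _ ≤ a * b * b := by gcongr
      _ = a * b ^ 2 := by ring
  · rw [zetaOneTwoTerm_eq_zero hab]
    positivity

lemma summable_zetaOneTwoTerm : Summable zetaOneTwoTerm := by
  have h := Real.summable_nat_rpow_inv.2 (by norm_num : (1 : ℝ) < 3 / 2)
  exact (h.mul_of_nonneg h (fun _ => by positivity) fun _ => by positivity).of_nonneg_of_le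
    zetaOneTwoTerm_nonneg zetaOneTwoTerm_le_rpow

lemma tornheimTerm_eq_add_zetaOneTwoTerm (a c : ℕ) :
    tornheimTerm (a, c) = zetaOneTwoTerm (a, a + c) + zetaOneTwoTerm (c, c + a) := by
  rcases Nat.eq_zero_or_pos a with rfl | ha
  · simp [tornheimTerm, zetaOneTwoTerm]
  rcases Nat.eq_zero_or_pos c with rfl | hc
  · simp [tornheimTerm, zetaOneTwoTerm]
  rw [zetaOneTwoTerm_of_lt ha (by omega), zetaOneTwoTerm_of_lt hc (by omega), tornheimTerm]
  have ha : (a : ℝ) ≠ 0 := by positivity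
  have hc : (c : ℝ) ≠ 0 := by positivity
  push_cast
  field_simp
  ring

lemma hasSum_zetaOneTwoTerm_comp_add :
    HasSum (fun p : ℕ × ℕ => zetaOneTwoTerm (p.1, p.1 + p.2)) (∑' p, zetaOneTwoTerm p) := by
  have hinj : Function.Injective fun p : ℕ × ℕ => (p.1, p.1 + p.2) := by
    rintro ⟨a, c⟩ ⟨a', c'⟩ h
    simp only [Prod.mk.injEq] at h ⊢
    omega
  refine (hinj.hasSum_iff fun ⟨a, b⟩ hp => ?_).2 summable_zetaOneTwoTerm.hasSum
  refine zetaOneTwoTerm_eq_zero fun hab => hp ⟨(a, b - a), ?_⟩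
  exact Prod.ext rfl (by dsimp only; omega)

lemma hasSum_tornheimTerm : HasSum tornheimTerm (2 * ∑' p, zetaOneTwoTerm p) := by
  have h := hasSum_zetaOneTwoTerm_comp_add
  rw [two_mul]
  exact (h.add ((Equiv.prodComm ℕ ℕ).hasSum_iff.2 h)).congr_fun fun p =>
    tornheimTerm_eq_add_zetaOneTwoTerm p.1 p.2

lemma hasSum_sub_add_of_antitone {g : ℕ → ℝ} (hg : Antitone g) (hg0 : Tendsto g atTop (𝓝 0))
    (k : ℕ) : HasSum (fun n => g n - g (n + k)) (∑ i ∈ range k, g i) := by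
  have hone : ∀ m, HasSum (fun n => g (n + m) - g (n + 1 + m)) (g m) := fun m => by
    refine (hasSum_iff_tendsto_nat_of_nonneg (fun n => sub_nonneg.2 (hg (by omega))) _).2 ?_
    simp only [Finset.sum_range_sub' (fun n => g (n + m)), zero_add]
    simpa using (hg0.comp (tendsto_add_atTop_nat m)).const_sub (g m)
  induction k with
  | zero => simp
  | succ k ih =>
    rw [Finset.sum_range_succ]
    convert ih.add (hone k) using 1
    ext n
    ring_nf

lemma tornheimTerm_succ_eq_sub {a : ℕ} (ha : a ≠ 0) (c : ℕ) :
    tornheimTerm (a, c + 1) =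
      1 / (a : ℝ) ^ 2 * (1 / ((c : ℝ) + 1) - 1 / (((c + a : ℕ) : ℝ) + 1)) := by
  have ha : (a : ℝ) ≠ 0 := by exact_mod_cast ha
  simp only [tornheimTerm]
  push_cast
  field_simp
  ring

lemma hasSum_tornheimTerm_fiber (a : ℕ) :
    HasSum (fun c => tornheimTerm (a, c)) (harmonic a / (a : ℝ) ^ 2) := by
  rcases eq_or_ne a 0 with rfl | ha
  · simp [tornheimTerm]
  have hg : Antitone fun n : ℕ => 1 / ((n : ℝ) + 1) := fun m n hmn => by
    dsimp only
    gcongr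
  have h := (hasSum_sub_add_of_antitone hg tendsto_one_div_add_atTop_nhds_zero_nat a).mul_left
    (1 / (a : ℝ) ^ 2)
  have hc0 : ∑ c ∈ range 1, tornheimTerm (a, c) = 0 := by simp [tornheimTerm]
  have hval : (harmonic a : ℝ) / (a : ℝ) ^ 2 =
      1 / (a : ℝ) ^ 2 * ∑ i ∈ range a, 1 / ((i : ℝ) + 1) := by
    simp [harmonic, div_eq_mul_inv, mul_comm]
  rw [← hasSum_nat_add_iff' 1, hc0, sub_zero, hval]
  exact h.congr_fun (tornheimTerm_succ_eq_sub ha)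

lemma hasSum_zetaOneTwoTerm_fiber (b : ℕ) :
    HasSum (fun a => zetaOneTwoTerm (a, b)) (harmonic (b - 1) / (b : ℝ) ^ 2) := by
  have h := hasSum_sum_of_ne_finset_zero (L := SummationFilter.unconditional ℕ)
    (f := fun a => zetaOneTwoTerm (a, b)) (s := Icc 1 (b - 1))
    fun a ha => zetaOneTwoTerm_eq_zero (by simp only [mem_Icc] at ha; omega)
  convert h using 1
  rw [harmonic_eq_sum_Icc, Rat.cast_sum, sum_div]
  refine sum_congr rfl fun a ha => ?_
  rw [mem_Icc] at ha
  rw [zetaOneTwoTerm_of_lt (by omega) (by omega)]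
  push_cast
  field_simp

lemma tsum_zetaOneTwoTerm : ∑' p, zetaOneTwoTerm p = ∑' n : ℕ, 1 / (n : ℝ) ^ 3 := by
  set T := ∑' p, zetaOneTwoTerm p
  have hH : HasSum (fun n : ℕ => (harmonic n : ℝ) / (n : ℝ) ^ 2) (2 * T) :=
    hasSum_tornheimTerm.prod_fiberwise hasSum_tornheimTerm_fiber
  have hZ : HasSum (fun n : ℕ => (harmonic (n - 1) : ℝ) / (n : ℝ) ^ 2) T :=
    ((Equiv.prodComm ℕ ℕ).hasSum_iff.2 summable_zetaOneTwoTerm.hasSum).prod_fiberwise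
      hasSum_zetaOneTwoTerm_fiber
  have hζ := (Real.summable_one_div_nat_pow.2 (by norm_num : 1 < 3)).hasSum
  have hsplit : ∀ n : ℕ,
      (harmonic n : ℝ) / (n : ℝ) ^ 2 = (harmonic (n - 1) : ℝ) / (n : ℝ) ^ 2 + 1 / (n : ℝ) ^ 3 := by
    rintro (_ | n)
    · simp
    · rw [Nat.add_sub_cancel, harmonic_succ]
      push_cast
      field_simp
  have := hH.unique ((hZ.add hζ).congr_fun hsplit)
  linarith

/-- Euler's relation `ζ(1,2) = ζ(3)`:
`∑_{0 < n₁ < n₂} 1/(n₁ n₂²) = ∑_{n ≥ 1} 1/n³`. -/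
theorem zeta_one_two_eq_zeta_three :
    (∑' p : {p : ℕ × ℕ // 0 < p.1 ∧ p.1 < p.2},
      (1 : ℝ) / ((p.1.1 : ℝ) * (p.1.2 : ℝ) ^ 2)) =
    ∑' n : ℕ+, (1 : ℝ) / (n : ℝ) ^ 3 := by
  rw [tsum_pnat_eq_tsum_of_eq_zero (f := fun n : ℕ => 1 / (n : ℝ) ^ 3) (by simp),
    ← tsum_zetaOneTwoTerm]
  exact _root_.tsum_subtype {p : ℕ × ℕ | 0 < p.1 ∧ p.1 < p.2}
    fun p => 1 / ((p.1 : ℝ) * (p.2 : ℝ) ^ 2)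
end

section
/- ζ(1,3) = (1/4)·ζ(4), i.e. ∑_{0 < n_1 < n_2} 1/(n_1 n_2^3) = (1/4)·∑_{n≥1} 1/n^4. -/
/-!
`ζ(2)² = ∑_{m,n ≥ 1} 1/(m²n²)` is evaluated in two ways. Splitting the double sum at the
diagonal (stuffle) gives `2ζ(2,2) + ζ(4)`. The partial fraction identity
`1/(m²n²) = 1/(m²(m+n)²) + 2/(m(m+n)³) + (the same with m ↔ n)`
followed by the substitution `(m, n) ↦ (m, m + n)` (shuffle) gives `2ζ(2,2) + 4ζ(1,3)`.
Comparing the two, `ζ(4) = 4ζ(1,3)`.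
-/

open Function

section SymmetricSums

variable {α : Type*}

theorem tsum_add_comp_swap {f : α × α → ℝ} (hf : Summable f) :
    ∑' p, (f p + f p.swap) = 2 * ∑' p, f p := by
  have hswap : ∑' p : α × α, f p.swap = ∑' p, f p := (Equiv.prodComm α α).tsum_eq f
  rw [hf.tsum_add hf.prod_symm, hswap]
  ring

theorem tsum_eq_two_mul_tsum_indicator_lt_add_tsum_diag [LinearOrder α] {F : α × α → ℝ}
    (hF : Summable F) (hsymm : ∀ p, F p.swap = F p) :
    ∑' p, F p = 2 * ∑' p, {p : α × α | p.1 < p.2}.indicator F p + ∑' a, F (a, a) := by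
  have hsplit : ∀ p, F p = ({p : α × α | p.1 < p.2}.indicator F p +
      {p : α × α | p.1 < p.2}.indicator F p.swap) + {p : α × α | p.1 = p.2}.indicator F p := by
    rintro ⟨a, b⟩
    rcases lt_trichotomy a b with h | rfl | h
    · simp [h, h.ne, h.not_gt]
    · simp
    · simp [h, h.ne', h.not_gt, ← hsymm (a, b)]
  have hdiag : ∑' p, {p : α × α | p.1 = p.2}.indicator F p = ∑' a, F (a, a) := by
    have hinj : Injective fun a : α => (a, a) := fun a b h => (Prod.mk.inj h).1
    rw [← hinj.tsum_eq]
    · simp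
    · intro p hp
      exact ⟨p.1, Prod.ext rfl (Set.mem_of_indicator_ne_zero hp :)⟩
  have hlt := hF.indicator {p : α × α | p.1 < p.2}
  rw [tsum_congr hsplit, (hlt.add hlt.prod_symm).tsum_add (hF.indicator _), tsum_add_comp_swap hlt,
    hdiag]

end SymmetricSums

section Shear

theorem range_fst_fst_add_snd :
    Set.range (fun p : ℕ × ℕ => (p.1, p.1 + p.2)) = {p | p.1 ≤ p.2} := by
  ext ⟨a, b⟩
  refine ⟨?_, fun h => ⟨(a, b - a), by simp_all⟩⟩
  rintro ⟨⟨c, d⟩, h⟩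
  simp only [Prod.mk.injEq] at h
  simp only [Set.mem_ofPred_eq]
  omega

theorem injective_fst_fst_add_snd : Injective fun p : ℕ × ℕ => (p.1, p.1 + p.2) := by
  rintro ⟨a, b⟩ ⟨c, d⟩ h
  simp only [Prod.mk.injEq] at h ⊢
  omega

variable {f : ℕ × ℕ → ℝ}

theorem tsum_comp_fst_fst_add_snd (hf : support f ⊆ {p | p.1 ≤ p.2}) :
    ∑' p : ℕ × ℕ, f (p.1, p.1 + p.2) = ∑' p, f p :=
  injective_fst_fst_add_snd.tsum_eq (range_fst_fst_add_snd ▸ hf)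

theorem Summable.comp_fst_fst_add_snd (hf : Summable f) :
    Summable fun p : ℕ × ℕ => f (p.1, p.1 + p.2) :=
  hf.comp_injective injective_fst_fst_add_snd

end Shear

noncomputable def invPowProd (a b : ℕ) (p : ℕ × ℕ) : ℝ := 1 / ((p.1 : ℝ) ^ a * (p.2 : ℝ) ^ b)

noncomputable def doubleZetaTerm (a b : ℕ) : ℕ × ℕ → ℝ :=
  {p : ℕ × ℕ | 0 < p.1 ∧ p.1 < p.2}.indicator (invPowProd a b)

noncomputable def doubleZeta (a b : ℕ) : ℝ := ∑' p, doubleZetaTerm a b p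

theorem doubleZeta_eq_tsum_subtype (a b : ℕ) :
    doubleZeta a b = ∑' p : {p : ℕ × ℕ // 0 < p.1 ∧ p.1 < p.2},
      1 / ((p.1.1 : ℝ) ^ a * (p.1.2 : ℝ) ^ b) :=
  (tsum_subtype {p : ℕ × ℕ | 0 < p.1 ∧ p.1 < p.2} (invPowProd a b)).symm

theorem summable_invPowProd {a b : ℕ} (ha : 1 < a) (hb : 1 < b) : Summable (invPowProd a b) := by
  have hprod := (Real.summable_one_div_nat_pow.mpr ha).mul_of_nonneg
    (Real.summable_one_div_nat_pow.mpr hb) (fun _ => by positivity) (fun _ => by positivity)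
  refine hprod.congr fun p => ?_
  rw [invPowProd, div_mul_div_comm, one_mul]

theorem doubleZetaTerm_nonneg (a b : ℕ) (p : ℕ × ℕ) : 0 ≤ doubleZetaTerm a b p :=
  Set.indicator_nonneg (fun _ _ => by unfold invPowProd; positivity) p

theorem doubleZetaTerm_succ_le (a b : ℕ) (p : ℕ × ℕ) :
    doubleZetaTerm a (b + 1) p ≤ doubleZetaTerm (a + 1) b p := by
  simp only [doubleZetaTerm, Set.indicator_apply, Set.mem_ofPred_eq]
  split_ifs with hp
  · have hm : (0 : ℝ) < p.1 := by exact_mod_cast hp.1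
    have hmn : (p.1 : ℝ) ≤ p.2 := by exact_mod_cast hp.2.le
    have hn : (0 : ℝ) < p.2 := hm.trans_le hmn
    apply one_div_le_one_div_of_le (by positivity)
    rw [pow_succ, pow_succ, mul_right_comm, mul_assoc]
    gcongr
  · rfl

theorem summable_doubleZetaTerm {a b : ℕ} (ha : 1 < a) (hb : 1 < b) :
    Summable (doubleZetaTerm a b) :=
  (summable_invPowProd ha hb).indicator _

theorem support_doubleZetaTerm_subset (a b : ℕ) : support (doubleZetaTerm a b) ⊆ {p | p.1 ≤ p.2} :=
  Set.support_indicator_subset.trans fun _ hp => hp.2.le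

theorem one_div_sq_mul_sq_eq_shuffle {x y : ℝ} (hx : x ≠ 0) (hy : y ≠ 0) (hxy : x + y ≠ 0) :
    1 / (x ^ 2 * y ^ 2) =
      (1 / (x ^ 2 * (x + y) ^ 2) + 2 * (1 / (x * (x + y) ^ 3))) +
      (1 / (y ^ 2 * (y + x) ^ 2) + 2 * (1 / (y * (y + x) ^ 3))) := by
  rw [add_comm y x]
  field_simp
  ring

noncomputable def shuffleTerm (p : ℕ × ℕ) : ℝ :=
  doubleZetaTerm 2 2 (p.1, p.1 + p.2) + 2 * doubleZetaTerm 1 3 (p.1, p.1 + p.2)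

theorem invPowProd_two_two_eq_shuffleTerm_add (p : ℕ × ℕ) :
    invPowProd 2 2 p = shuffleTerm p + shuffleTerm p.swap := by
  obtain ⟨m, n⟩ := p
  rcases Nat.eq_zero_or_pos m with rfl | hm
  · simp [invPowProd, shuffleTerm, doubleZetaTerm]
  rcases Nat.eq_zero_or_pos n with rfl | hn
  · simp [invPowProd, shuffleTerm, doubleZetaTerm]
  have hmn : (m, m + n) ∈ {p : ℕ × ℕ | 0 < p.1 ∧ p.1 < p.2} := ⟨hm, by omega⟩
  have hnm : (n, n + m) ∈ {p : ℕ × ℕ | 0 < p.1 ∧ p.1 < p.2} := ⟨hn, by omega⟩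
  simp only [shuffleTerm, doubleZetaTerm, Set.indicator_of_mem hmn, Set.indicator_of_mem hnm,
    invPowProd, Prod.swap, Nat.cast_add, pow_one]
  exact one_div_sq_mul_sq_eq_shuffle (by positivity) (by positivity) (by positivity)

theorem tsum_invPowProd_two_two_eq_shuffle :
    ∑' p, invPowProd 2 2 p = 2 * doubleZeta 2 2 + 4 * doubleZeta 1 3 := by
  have h22 : Summable (doubleZetaTerm 2 2) := summable_doubleZetaTerm one_lt_two one_lt_two
  have h13 : Summable (doubleZetaTerm 1 3) :=
    .of_nonneg_of_le (doubleZetaTerm_nonneg 1 3) (doubleZetaTerm_succ_le 1 2) h22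
  have hS : Summable shuffleTerm :=
    h22.comp_fst_fst_add_snd.add (h13.comp_fst_fst_add_snd.mul_left 2)
  rw [tsum_congr invPowProd_two_two_eq_shuffleTerm_add, tsum_add_comp_swap hS]
  simp only [shuffleTerm]
  rw [h22.comp_fst_fst_add_snd.tsum_add (h13.comp_fst_fst_add_snd.mul_left 2), tsum_mul_left,
    tsum_comp_fst_fst_add_snd (support_doubleZetaTerm_subset 2 2),
    tsum_comp_fst_fst_add_snd (support_doubleZetaTerm_subset 1 3), doubleZeta, doubleZeta]
  ring

theorem tsum_invPowProd_two_two_eq_stuffle :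
    ∑' p, invPowProd 2 2 p = 2 * doubleZeta 2 2 + ∑' n : ℕ+, 1 / (n : ℝ) ^ 4 := by
  have hsymm (p : ℕ × ℕ) : invPowProd 2 2 p.swap = invPowProd 2 2 p := by
    simp only [invPowProd, Prod.fst_swap, Prod.snd_swap, mul_comm]
  -- the terms with `p.1 = 0` vanish because `1 / 0 = 0`
  have hlt : {p : ℕ × ℕ | p.1 < p.2}.indicator (invPowProd 2 2) = doubleZetaTerm 2 2 := by
    ext ⟨m, n⟩
    rcases Nat.eq_zero_or_pos m with rfl | hm
    · simp [invPowProd, doubleZetaTerm]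
    · simp [doubleZetaTerm, Set.indicator_apply, hm]
  have hdiag : ∑' n : ℕ, invPowProd 2 2 (n, n) = ∑' n : ℕ+, 1 / (n : ℝ) ^ 4 := by
    have hpow (n : ℕ) : invPowProd 2 2 (n, n) = 1 / (n : ℝ) ^ 4 := by
      rw [invPowProd, ← pow_add]
    rw [tsum_congr hpow,
      ← tsum_zero_pnat_eq_tsum_nat (Real.summable_one_div_nat_pow.mpr (by norm_num))]
    simp
  rw [tsum_eq_two_mul_tsum_indicator_lt_add_tsum_diag (summable_invPowProd one_lt_two one_lt_two)
    hsymm, hlt, hdiag, doubleZeta]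

/-- `ζ(1,3) = (1/4)·ζ(4)`:
`∑_{0 < n₁ < n₂} 1/(n₁ n₂³) = (1/4) ∑_{n ≥ 1} 1/n⁴`. -/
theorem zeta_one_three_eq_quarter_zeta_four :
    (∑' p : {p : ℕ × ℕ // 0 < p.1 ∧ p.1 < p.2},
      (1 : ℝ) / ((p.1.1 : ℝ) * (p.1.2 : ℝ) ^ 3)) =
    (1 / 4) * ∑' n : ℕ+, (1 : ℝ) / (n : ℝ) ^ 4 := by
  have h := tsum_invPowProd_two_two_eq_stuffle.symm.trans tsum_invPowProd_two_two_eq_shuffle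
  have h13 := doubleZeta_eq_tsum_subtype 1 3
  simp only [pow_one] at h13
  rw [← h13]
  linarith
end

section
/- ζ(2,2) = (3/4)·ζ(4), i.e. ∑_{0 < n_1 < n_2} 1/(n_1^2 n_2^2) = (3/4)·∑_{n≥1} 1/n^4. -/
/-!
Squaring `ζ(2) = ∑ 1/n²` and splitting the double sum over `(n₁, n₂)` into `n₁ < n₂`, `n₁ > n₂`
and `n₁ = n₂` gives the stuffle relation `ζ(2)² = 2 ζ(2,2) + ζ(4)`. Euler's values
`ζ(2) = π²/6` and `ζ(4) = π⁴/90` then give `ζ(2,2) = π⁴/120 = (3/4) ζ(4)`.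
-/

open Set

section Stuffle

variable {ι : Type*}

theorem indicator_lt_add_indicator_gt_add_indicator_diagonal {M : Type*} [AddZeroClass M]
    [LinearOrder ι] (f : ι × ι → M) :
    {p | p.1 < p.2}.indicator f + {p | p.2 < p.1}.indicator f + (diagonal ι).indicator f = f := by
  funext p
  rcases lt_trichotomy p.1 p.2 with h | h | h
  · simp [indicator, h, h.ne, h.not_gt]
  · simp [indicator, h]
  · simp [indicator, h, h.ne', h.not_gt]

theorem tsum_indicator_gt_mul_eq_tsum_indicator_lt_mul {R : Type*} [CommSemiring R]
    [TopologicalSpace R] [LinearOrder ι] (a : ι → R) :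
    ∑' p : ι × ι, {p | p.2 < p.1}.indicator (fun p ↦ a p.1 * a p.2) p =
      ∑' p : ι × ι, {p | p.1 < p.2}.indicator (fun p ↦ a p.1 * a p.2) p := by
  rw [← (Equiv.prodComm ι ι).tsum_eq]
  congr 1
  funext p
  by_cases h : p.1 < p.2 <;> simp [indicator, h, mul_comm]

theorem tsum_indicator_diagonal_mul {R : Type*} [Semiring R] [TopologicalSpace R] (a : ι → R) :
    ∑' p : ι × ι, (diagonal ι).indicator (fun p ↦ a p.1 * a p.2) p = ∑' i, a i ^ 2 := by
  have hdiag : Function.Injective fun i : ι ↦ (i, i) := fun i j h ↦ congrArg Prod.fst h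
  rw [← hdiag.tsum_eq]
  · simp [sq]
  · intro p hp
    have hp' : p ∈ diagonal ι := support_indicator_subset hp
    exact ⟨p.1, Prod.ext rfl hp'⟩

theorem tsum_sq_eq_two_mul_tsum_lt_add_tsum_sq {R : Type*} [CommRing R] [UniformSpace R]
    [IsUniformAddGroup R] [CompleteSpace R] [IsTopologicalRing R] [T2Space R] [LinearOrder ι]
    {a : ι → R} (ha : Summable a) (haa : Summable fun p : ι × ι ↦ a p.1 * a p.2) :
    (∑' i, a i) ^ 2 = 2 * ∑' p : {p : ι × ι // p.1 < p.2}, a p.1.1 * a p.1.2 + ∑' i, a i ^ 2 := by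
  set f : ι × ι → R := fun p ↦ a p.1 * a p.2
  have hsplit : ∑' p, f p = ∑' p, {p | p.1 < p.2}.indicator f p +
      ∑' p, {p | p.2 < p.1}.indicator f p + ∑' p, (diagonal ι).indicator f p := by
    rw [← (haa.indicator _).tsum_add (haa.indicator _),
      ← ((haa.indicator _).add (haa.indicator _)).tsum_add (haa.indicator _)]
    exact tsum_congr fun p ↦
      (congrFun (indicator_lt_add_indicator_gt_add_indicator_diagonal f) p).symm
  rw [sq, ha.tsum_mul_tsum ha haa, hsplit, tsum_indicator_gt_mul_eq_tsum_indicator_lt_mul,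
    tsum_indicator_diagonal_mul, ← tsum_subtype, two_mul]
  rfl

end Stuffle

open Real

theorem tsum_lt_one_div_sq_mul_one_div_sq :
    ∑' p : {p : ℕ × ℕ // p.1 < p.2}, 1 / (p.1.1 : ℝ) ^ 2 * (1 / (p.1.2 : ℝ) ^ 2) = π ^ 4 / 120 := by
  have hnonneg : 0 ≤ fun n : ℕ ↦ 1 / (n : ℝ) ^ 2 := fun n ↦ by positivity
  have hstuffle := tsum_sq_eq_two_mul_tsum_lt_add_tsum_sq hasSum_zeta_two.summable
    (hasSum_zeta_two.summable.mul_of_nonneg hasSum_zeta_two.summable hnonneg hnonneg)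
  have hsq : ∀ n : ℕ, (1 / (n : ℝ) ^ 2) ^ 2 = 1 / (n : ℝ) ^ 4 := fun n ↦ by ring
  rw [hasSum_zeta_two.tsum_eq, tsum_congr hsq, hasSum_zeta_four.tsum_eq] at hstuffle
  linear_combination -hstuffle / 2

-- The terms with `n₁ = 0` on the right vanish because `1 / 0 = 0`.
theorem tsum_pos_lt_one_div_sq_mul_sq_eq_tsum_lt :
    ∑' p : {p : ℕ × ℕ // 0 < p.1 ∧ p.1 < p.2}, 1 / ((p.1.1 : ℝ) ^ 2 * (p.1.2 : ℝ) ^ 2) =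
      ∑' p : {p : ℕ × ℕ // p.1 < p.2}, 1 / (p.1.1 : ℝ) ^ 2 * (1 / (p.1.2 : ℝ) ^ 2) := by
  refine (tsum_subtype {p : ℕ × ℕ | 0 < p.1 ∧ p.1 < p.2}
    fun p ↦ (1 : ℝ) / ((p.1 : ℝ) ^ 2 * (p.2 : ℝ) ^ 2)).trans
    (.trans ?_ (tsum_subtype {p : ℕ × ℕ | p.1 < p.2}
      fun p ↦ (1 : ℝ) / (p.1 : ℝ) ^ 2 * (1 / (p.2 : ℝ) ^ 2)).symm)
  congr 1
  funext p
  rcases Nat.eq_zero_or_pos p.1 with h0 | h0 <;> simp [indicator, h0, mul_comm]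

/-- `ζ(2,2) = (3/4)·ζ(4)`:
`∑_{0 < n₁ < n₂} 1/(n₁² n₂²) = (3/4) ∑_{n ≥ 1} 1/n⁴`. -/
theorem zeta_two_two_eq_three_quarters_zeta_four :
    (∑' p : {p : ℕ × ℕ // 0 < p.1 ∧ p.1 < p.2},
      (1 : ℝ) / ((p.1.1 : ℝ) ^ 2 * (p.1.2 : ℝ) ^ 2)) =
    (3 / 4) * ∑' n : ℕ+, (1 : ℝ) / (n : ℝ) ^ 4 := by
  rw [tsum_pos_lt_one_div_sq_mul_sq_eq_tsum_lt, tsum_lt_one_div_sq_mul_one_div_sq,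
    tsum_pnat_eq_tsum_of_eq_zero (f := fun n : ℕ ↦ 1 / (n : ℝ) ^ 4) (by simp),
    hasSum_zeta_four.tsum_eq]
  ring
end
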